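/- arXiv:2106.04497 — 3 statements merged into one kernel-verified Lean document; each statement's English description precedes it below -/
import Mathlib

section
/- Let K = cos(2π/5). Let c and d be the unique nonnegative reals with cosh c = K+1 and cosh d = 2K² + 2K + 1. Then 1.56 < d/c < 1.57. -/
set_option maxHeartbeats 1000000 in
private lemma cosh_key (a b : ℝ) :
    Real.cosh (a + b) = 2 * Real.cosh a * Real.cosh b - Real.cosh (a - b) := by
  rw [Real.cosh_add, Real.cosh_sub]; ring

set_option maxHeartbeats 1000000 in
/-- Proposition 5.1 of the paper: the optimal quasiisometry constant
`λ = d/c = arccosh(2K²+2K+1)/arccosh(K+1) ≈ 1.5627`, where `K = cos (2π/5)`. -/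
theorem pentagon_ratio (K c d : ℝ)
    (hK : K = Real.cos (2 * Real.pi / 5))
    (hc0 : 0 ≤ c) (hc : Real.cosh c = K + 1)
    (hd0 : 0 ≤ d) (hd : Real.cosh d = 2 * K ^ 2 + 2 * K + 1) :
    1.56 < d / c ∧ d / c < 1.57 := by
  set s : ℝ := Real.sqrt 5 with hs_def
  have hs : s ^ 2 = 5 := Real.sq_sqrt (by norm_num)
  have hsp : 2 < s := by nlinarith [Real.sqrt_nonneg 5]
  have hK5 : K = (s - 1) / 4 := by
    rw [hK, show (2 : ℝ) * Real.pi / 5 = 2 * (Real.pi / 5) from by ring,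
      Real.cos_two_mul, Real.cos_pi_div_five]
    linear_combination ((1 : ℝ) / 8) * hs
  have hvc : Real.cosh c = (3 + 1 * s) / 4 := by rw [hc, hK5]; ring
  have hvd : Real.cosh d = (5 + 1 * s) / 4 := by
    rw [hd, hK5]; linear_combination ((1 : ℝ) / 8) * hs
  have hc2 : Real.cosh (2 * c) = (3 + 3 * s) / 4 := by
    rw [show (2 : ℝ) * c = c + c from by ring, cosh_key]
    rw [show c - c = 0 from by ring, Real.cosh_zero]
    rw [hvc]
    linear_combination ((1 : ℝ) / 8) * hs
  have hc3 : Real.cosh (3 * c) = (9 + 5 * s) / 4 := by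
    rw [show (3 : ℝ) * c = 2 * c + c from by ring, cosh_key]
    rw [show 2 * c - c = c from by ring]
    rw [hc2, hvc]
    linear_combination ((3 : ℝ) / 8) * hs
  have hc5 : Real.cosh (5 * c) = (48 + 20 * s) / 4 := by
    rw [show (5 : ℝ) * c = 3 * c + 2 * c from by ring, cosh_key]
    rw [show 3 * c - 2 * c = c from by ring]
    rw [hc3, hc2, hvc]
    linear_combination ((15 : ℝ) / 8) * hs
  have hc6 : Real.cosh (6 * c) = (99 + 45 * s) / 4 := by
    rw [show (6 : ℝ) * c = 3 * c + 3 * c from by ring, cosh_key]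
    rw [show 3 * c - 3 * c = 0 from by ring, Real.cosh_zero]
    rw [hc3]
    linear_combination ((25 : ℝ) / 8) * hs
  have hc10 : Real.cosh (10 * c) = (2148 + 960 * s) / 4 := by
    rw [show (10 : ℝ) * c = 5 * c + 5 * c from by ring, cosh_key]
    rw [show 5 * c - 5 * c = 0 from by ring, Real.cosh_zero]
    rw [hc5]
    linear_combination ((50 : ℝ) / 1) * hs
  have hc12 : Real.cosh (12 * c) = (9959 + 4455 * s) / 4 := by
    rw [show (12 : ℝ) * c = 6 * c + 6 * c from by ring, cosh_key]
    rw [show 6 * c - 6 * c = 0 from by ring, Real.cosh_zero]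
    rw [hc6]
    linear_combination ((2025 : ℝ) / 8) * hs
  have hc15 : Real.cosh (15 * c) = (99504 + 44500 * s) / 4 := by
    rw [show (15 : ℝ) * c = 10 * c + 5 * c from by ring, cosh_key]
    rw [show 10 * c - 5 * c = 5 * c from by ring]
    rw [hc10, hc5]
    linear_combination ((2400 : ℝ) / 1) * hs
  have hc18 : Real.cosh (18 * c) = (994059 + 444555 * s) / 4 := by
    rw [show (18 : ℝ) * c = 12 * c + 6 * c from by ring, cosh_key]
    rw [show 12 * c - 6 * c = 6 * c from by ring]
    rw [hc12, hc6]
    linear_combination ((200475 : ℝ) / 8) * hs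
  have hc25 : Real.cosh (25 * c) = (213667248 + 95554900 * s) / 4 := by
    rw [show (25 : ℝ) * c = 15 * c + 10 * c from by ring, cosh_key]
    rw [show 15 * c - 10 * c = 5 * c from by ring]
    rw [hc15, hc10, hc5]
    linear_combination ((5340000 : ℝ) / 1) * hs
  have hc36 : Real.cosh (36 * c) = (988149517799 + 441913898745 * s) / 4 := by
    rw [show (36 : ℝ) * c = 18 * c + 18 * c from by ring, cosh_key]
    rw [show 18 * c - 18 * c = 0 from by ring, Real.cosh_zero]
    rw [hc18]
    linear_combination ((197629148025 : ℝ) / 8) * hs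
  have hd2 : Real.cosh (2 * d) = (11 + 5 * s) / 4 := by
    rw [show (2 : ℝ) * d = d + d from by ring, cosh_key]
    rw [show d - d = 0 from by ring, Real.cosh_zero]
    rw [hvd]
    linear_combination ((1 : ℝ) / 8) * hs
  have hd3 : Real.cosh (3 * d) = (35 + 17 * s) / 4 := by
    rw [show (3 : ℝ) * d = 2 * d + d from by ring, cosh_key]
    rw [show 2 * d - d = d from by ring]
    rw [hd2, hvd]
    linear_combination ((5 : ℝ) / 8) * hs
  have hd4 : Real.cosh (4 * d) = (119 + 55 * s) / 4 := by
    rw [show (4 : ℝ) * d = 2 * d + 2 * d from by ring, cosh_key]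
    rw [show 2 * d - 2 * d = 0 from by ring, Real.cosh_zero]
    rw [hd2]
    linear_combination ((25 : ℝ) / 8) * hs
  have hd5 : Real.cosh (5 * d) = (400 + 180 * s) / 4 := by
    rw [show (5 : ℝ) * d = 3 * d + 2 * d from by ring, cosh_key]
    rw [show 3 * d - 2 * d = d from by ring]
    rw [hd3, hd2, hvd]
    linear_combination ((85 : ℝ) / 8) * hs
  have hd6 : Real.cosh (6 * d) = (1331 + 595 * s) / 4 := by
    rw [show (6 : ℝ) * d = 3 * d + 3 * d from by ring, cosh_key]
    rw [show 3 * d - 3 * d = 0 from by ring, Real.cosh_zero]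
    rw [hd3]
    linear_combination ((289 : ℝ) / 8) * hs
  have hd8 : Real.cosh (8 * d) = (14639 + 6545 * s) / 4 := by
    rw [show (8 : ℝ) * d = 4 * d + 4 * d from by ring, cosh_key]
    rw [show 4 * d - 4 * d = 0 from by ring, Real.cosh_zero]
    rw [hd4]
    linear_combination ((3025 : ℝ) / 8) * hs
  have hd11 : Real.cosh (11 * d) = (533945 + 238789 * s) / 4 := by
    rw [show (11 : ℝ) * d = 6 * d + 5 * d from by ring, cosh_key]
    rw [show 6 * d - 5 * d = d from by ring]
    rw [hd6, hd5, hvd]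
    linear_combination ((26775 : ℝ) / 2) * hs
  have hd12 : Real.cosh (12 * d) = (1770839 + 791945 * s) / 4 := by
    rw [show (12 : ℝ) * d = 6 * d + 6 * d from by ring, cosh_key]
    rw [show 6 * d - 6 * d = 0 from by ring, Real.cosh_zero]
    rw [hd6]
    linear_combination ((354025 : ℝ) / 8) * hs
  have hd16 : Real.cosh (16 * d) = (214242719 + 95812255 * s) / 4 := by
    rw [show (16 : ℝ) * d = 8 * d + 8 * d from by ring, cosh_key]
    rw [show 8 * d - 8 * d = 0 from by ring, Real.cosh_zero]
    rw [hd8]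
    linear_combination ((42837025 : ℝ) / 8) * hs
  have hd23 : Real.cosh (23 * d) = (945534701435 + 422855973497 * s) / 4 := by
    rw [show (23 : ℝ) * d = 12 * d + 11 * d from by ring, cosh_key]
    rw [show 12 * d - 11 * d = d from by ring]
    rw [hd12, hd11, hvd]
    linear_combination ((189107754605 : ℝ) / 8) * hs
  have hlt1 : Real.cosh (25 * c) < Real.cosh (16 * d) := by
    rw [hc25, hd16]; linarith
  have hlt2 : Real.cosh (23 * d) < Real.cosh (36 * c) := by
    rw [hd23, hc36]; linarith
  have h1 : 25 * c < 16 * d := by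
    have h := Real.cosh_lt_cosh.mp hlt1
    rwa [abs_of_nonneg (by linarith), abs_of_nonneg (by linarith)] at h
  have h2 : 23 * d < 36 * c := by
    have h := Real.cosh_lt_cosh.mp hlt2
    rwa [abs_of_nonneg (by linarith), abs_of_nonneg (by linarith)] at h
  have hcpos : 0 < c := by
    rcases hc0.lt_or_eq with h | h
    · exact h
    · exfalso
      have h1 : Real.cosh c = 1 := by rw [← h, Real.cosh_zero]
      rw [hvc] at h1; nlinarith
  constructor
  · rw [lt_div_iff₀ hcpos]; nlinarith
  · rw [div_lt_iff₀ hcpos]; nlinarith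
end

section
/- Let K = cos(2π/5). Let a and c be the unique nonnegative reals with cosh a = √(K+1) and cosh c = K+1. Then 3a > 2c. -/
/-- From the proof of Proposition 5.3 of the paper: `3a > 2c`, where `K = cos (2π/5)`,
`cosh a = √(K+1)` and `cosh c = K+1` with `a, c ≥ 0`. -/
theorem three_a_gt_two_c (K a c : ℝ)
    (hK : K = Real.cos (2 * Real.pi / 5))
    (ha0 : 0 ≤ a) (ha : Real.cosh a = Real.sqrt (K + 1))
    (hc0 : 0 ≤ c) (hc : Real.cosh c = K + 1) :
    3 * a > 2 * c := by
  set u := Real.sqrt 5 with hu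
  have hu2 : u ^ 2 = 5 := Real.sq_sqrt (by norm_num)
  have hul : (2 : ℝ) ≤ u := by
    nlinarith [Real.sqrt_nonneg 5]
  have hK' : K = (u - 1) / 4 := by
    rw [hK]
    have h25 : (2 : ℝ) * Real.pi / 5 = 2 * (Real.pi / 5) := by ring
    rw [h25, Real.cos_two_mul, Real.cos_pi_div_five]
    nlinarith [hu2]
  have hK1 : (0 : ℝ) ≤ K + 1 := by rw [hK']; linarith
  set s := Real.sqrt (K + 1) with hs
  have hs2 : s ^ 2 = K + 1 := Real.sq_sqrt hK1
  have hs0 : 0 ≤ s := Real.sqrt_nonneg _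
  -- cosh (3a) = 4 s^3 - 3 s
  have h3a : Real.cosh (3 * a) = 4 * s ^ 3 - 3 * s := by
    rw [Real.cosh_three_mul, ha]
  -- cosh (2c) = 2 (K+1)^2 - 1
  have h2c : Real.cosh (2 * c) = 2 * (K + 1) ^ 2 - 1 := by
    rw [Real.cosh_two_mul, Real.sinh_sq, hc]; ring
  have key : Real.cosh (2 * c) < Real.cosh (3 * a) := by
    rw [h3a, h2c]
    have h1 : 4 * s ^ 3 - 3 * s = u * s := by
      have : s ^ 2 * s = ((u - 1) / 4 + 1) * s := by rw [hs2, hK']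
      nlinarith [this]
    rw [h1, hK']
    have hrhs : 2 * ((u - 1) / 4 + 1) ^ 2 - 1 = (3 * u + 3) / 4 := by nlinarith [hu2]
    rw [hrhs]
    have hsl : 1 ≤ s := by nlinarith
    nlinarith [sq_nonneg (u * s - (3 * u + 3) / 4), mul_pos (by linarith : (0:ℝ) < u) (by linarith : (0:ℝ) < s)]
  have := (Real.cosh_lt_cosh.mp key)
  rw [abs_of_nonneg (by linarith), abs_of_nonneg (by linarith)] at this
  linarith
end

section
/- Let K = cos(2π/5). Let c and g be the unique nonnegative reals with cosh c = K+1 and cosh(2g) = 1 + 2K·(8K² + 8K + 1)². Then g > 2c. -/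
/-- From the proof of Proposition 5.3 of the paper: `g > 2c`, where `K = cos (2π/5)`,
`cosh c = K+1` and `cosh (2g) = 1 + 2K(8K²+8K+1)²` with `c, g ≥ 0`. -/
theorem g_gt_two_c (K c g : ℝ)
    (hK : K = Real.cos (2 * Real.pi / 5))
    (hc0 : 0 ≤ c) (hc : Real.cosh c = K + 1)
    (hg0 : 0 ≤ g) (hg : Real.cosh (2 * g) = 1 + 2 * K * (8 * K ^ 2 + 8 * K + 1) ^ 2) :
    g > 2 * c := by
  have hs : Real.sqrt 5 ^ 2 = 5 := Real.sq_sqrt (by norm_num)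
  have hs1 : (2 : ℝ) < Real.sqrt 5 := by
    nlinarith [Real.sqrt_nonneg 5]
  have hKval : K = (Real.sqrt 5 - 1) / 4 := by
    have h2 : (2 : ℝ) * Real.pi / 5 = 2 * (Real.pi / 5) := by ring
    rw [hK, h2, Real.cos_two_mul, Real.cos_pi_div_five]
    nlinarith
  have h4c : Real.cosh (4 * c) = 2 * (2 * (K + 1) ^ 2 - 1) ^ 2 - 1 := by
    have h2c : Real.cosh (2 * c) = 2 * (K + 1) ^ 2 - 1 := by
      rw [Real.cosh_two_mul, Real.sinh_sq, hc]; ring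
    have : (4 : ℝ) * c = 2 * (2 * c) := by ring
    rw [this, Real.cosh_two_mul, Real.sinh_sq, h2c]; ring
  have hlt : Real.cosh (4 * c) < Real.cosh (2 * g) := by
    rw [h4c, hg, hKval]
    nlinarith [hs, hs1]
  have := (Real.cosh_lt_cosh.mp hlt)
  rw [abs_of_nonneg (by linarith), abs_of_nonneg (by linarith)] at this
  linarith
end
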